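/- Let h ∈ ℝ^N have all entries nonnegative and ‖h‖₂ = 1, and define P f = f − ⟨f, h⟩ h for f ∈ ℝ^N. Then for every f ∈ ℝ^N, ‖P(σ(f))‖₂ ≤ ‖P f‖₂, where σ(f) is the entrywise ReLU of f. -/
import Mathlib


open Matrix

noncomputable section

/-- Euclidean (2-)norm on `ℝ^N`. -/
def rnorm2 {N : ℕ} (f : Fin N → ℝ) : ℝ := Real.sqrt (∑ i, f i ^ 2)

/-- Frobenius norm of a real matrix. -/
def frob {N m : ℕ} (M : Matrix (Fin N) (Fin m) ℝ) : ℝ := Real.sqrt (∑ i, ∑ j, M i j ^ 2)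

/-- Entrywise ReLU of a vector. -/
def reluV {N : ℕ} (f : Fin N → ℝ) : Fin N → ℝ := fun i => max (f i) 0

/-- Entrywise ReLU of a matrix. -/
def reluM {N m : ℕ} (M : Matrix (Fin N) (Fin m) ℝ) : Matrix (Fin N) (Fin m) ℝ :=
  Matrix.of fun i j => max (M i j) 0

/-- `P f = f - ⟨f, h⟩ h`. -/
def Pv {N : ℕ} (h : Fin N → ℝ) (f : Fin N → ℝ) : Fin N → ℝ := f - (f ⬝ᵥ h) • h

/-- `P` applied columnwise to a matrix. -/
def Pcol {N m : ℕ} (h : Fin N → ℝ) (M : Matrix (Fin N) (Fin m) ℝ) :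
    Matrix (Fin N) (Fin m) ℝ :=
  Matrix.of fun i j => M i j - ((fun x => M x j) ⬝ᵥ h) * h i

/-- if `h ∈ ℝ^N` has nonnegative entries and `‖h‖₂ = 1`, with
`P f = f - ⟨f, h⟩ h`, then for every `f ∈ ℝ^N`, `‖P(σ(f))‖₂ ≤ ‖P f‖₂`. -/
theorem stmt10 (N : ℕ) (hN : 1 ≤ N) (h : Fin N → ℝ) (hpos : ∀ i, 0 ≤ h i)
    (hnorm : rnorm2 h = 1) (f : Fin N → ℝ) :
    rnorm2 (Pv h (reluV f)) ≤ rnorm2 (Pv h f) := by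
  have hH : ∑ i, h i ^ 2 = 1 := by
    have := hnorm
    unfold rnorm2 at this
    exact (Real.sqrt_eq_one.mp this)
  set n : Fin N → ℝ := fun i => max (-f i) 0 with hn
  have hsq : ∀ i, f i ^ 2 = (reluV f i) ^ 2 + n i ^ 2 := by
    intro i
    rcases le_total (f i) 0 with h' | h'
    · simp [reluV, hn, max_eq_right h', max_eq_left (neg_nonneg.2 h')]
    · simp [reluV, hn, max_eq_left h', max_eq_right (neg_nonpos.2 h')]
  have hdec : ∀ i, f i = reluV f i - n i := by
    intro i
    rcases le_total (f i) 0 with h' | h'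
    · simp [reluV, hn, max_eq_right h', max_eq_left (neg_nonneg.2 h')]
    · simp [reluV, hn, max_eq_left h', max_eq_right (neg_nonpos.2 h')]
  have ha : 0 ≤ reluV f ⬝ᵥ h :=
    Finset.sum_nonneg fun i _ => mul_nonneg (le_max_right _ _) (hpos i)
  have hm : 0 ≤ n ⬝ᵥ h :=
    Finset.sum_nonneg fun i _ => mul_nonneg (le_max_right _ _) (hpos i)
  have hb : f ⬝ᵥ h = reluV f ⬝ᵥ h - n ⬝ᵥ h := by
    simp only [dotProduct, ← Finset.sum_sub_distrib]
    refine Finset.sum_congr rfl fun i _ => ?_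
    rw [hdec i]; ring
  have hCS : (n ⬝ᵥ h) ^ 2 ≤ ∑ i, n i ^ 2 := by
    have := Finset.sum_mul_sq_le_sq_mul_sq Finset.univ n h
    rw [hH, mul_one] at this
    simpa [dotProduct] using this
  have hSf : ∑ i, f i ^ 2 = (∑ i, (reluV f i) ^ 2) + ∑ i, n i ^ 2 := by
    rw [← Finset.sum_add_distrib]
    exact Finset.sum_congr rfl fun i _ => hsq i
  have hexp : ∀ g : Fin N → ℝ, ∑ i, (Pv h g i) ^ 2 = ∑ i, g i ^ 2 - (g ⬝ᵥ h) ^ 2 := by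
    intro g
    have hpt : ∀ i, (Pv h g i) ^ 2 =
        g i ^ 2 - 2 * (g ⬝ᵥ h) * (g i * h i) + (g ⬝ᵥ h) ^ 2 * h i ^ 2 := by
      intro i
      simp [Pv]
      ring
    rw [Finset.sum_congr rfl fun i _ => hpt i]
    rw [Finset.sum_add_distrib, Finset.sum_sub_distrib, ← Finset.mul_sum, ← Finset.mul_sum,
      hH, mul_one]
    simp only [dotProduct]
    ring
  unfold rnorm2
  apply Real.sqrt_le_sqrt
  rw [hexp, hexp, hSf, hb]
  nlinarith [mul_nonneg ha hm]
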